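/- arXiv:1612.06475 — 2 statements merged into one kernel-verified Lean document; each statement's English description precedes it below -/
import Mathlib

section
/- For every valid configuration c = (z, σ, t) and every reachable tree t' ∈ D(c) with t' ≠ t*(c), one has F1(t') < F1(c); that is, t*(c) is the unique maximizer of F1 over D(c). (Corollary 1.) -/
/-!
Formalization of the span-based Structure/Label transition parsing system of
Cross & Huang (2016), "Span-Based Constituency Parsing with a Structure-Label
System and Provably Optimal Dynamic Oracles".

A configuration is `(z, σ, t)` where `z` is the step number, `σ` the stack of
span boundaries and `t` the set of brackets built so far.  A bracket is a
triple `(X, i, j)` with `X` a nonterminal label and `i < j ≤ n` a span.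
-/

namespace SpanParser

structure Config (N : Type*) where
  z : ℕ
  σ : List ℕ
  t : Finset (N × ℕ × ℕ)

variable {N : Type*}

/-- The span of a bracket. -/
def span (b : N × ℕ × ℕ) : ℕ × ℕ := b.2

/-- Top (rightmost) boundary of the stack. -/
def topJ (σ : List ℕ) : ℕ := σ.getLastD 0

/-- Second-to-top boundary of the stack. -/
def topI (σ : List ℕ) : ℕ := σ.dropLast.getLastD 0

/-- Parser actions: shift, combine, label-`X`, and nolabel. -/
inductive Action (N : Type*) where
  | sh : Action N
  | comb : Action N
  | label : N → Action N
  | nolabel : Action N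

variable [DecidableEq N]

/-- Applicability of an action at a configuration (for sentence length `n`). -/
def App (n : ℕ) (c : Config N) : Action N → Prop
  | .sh      => Even c.z ∧ c.σ ≠ [] ∧ topJ c.σ < n
  | .comb    => Even c.z ∧ 3 ≤ c.σ.length
  | .label _ => Odd c.z ∧ 2 ≤ c.σ.length
  | .nolabel => Odd c.z ∧ 2 ≤ c.σ.length ∧ c.z < 4 * n - 1

/-- The result `τ(c)` of applying action `τ` to configuration `c`. -/
def doAct (c : Config N) : Action N → Config N
  | .sh      => ⟨c.z + 1, c.σ ++ [topJ c.σ + 1], c.t⟩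
  | .comb    => ⟨c.z + 1, c.σ.dropLast.dropLast ++ [topJ c.σ], c.t⟩
  | .label X => ⟨c.z + 1, c.σ, insert (X, topI c.σ, topJ c.σ) c.t⟩
  | .nolabel => ⟨c.z + 1, c.σ, c.t⟩

/-- The initial configuration `(0, [0], ∅)`. -/
def initial (N : Type*) : Config N := ⟨0, [0], ∅⟩

/-- One transition step `c ⊢ c'`. -/
def Step (n : ℕ) (c c' : Config N) : Prop := ∃ a, App n c a ∧ c' = doAct c a

/-- `⊢*`: reflexive-transitive closure of the transition relation. -/
def Reaches (n : ℕ) : Config N → Config N → Prop := Relation.ReflTransGen (Step n)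

/-- A configuration is valid if it is reachable from the initial configuration. -/
def Valid (n : ℕ) (c : Config N) : Prop := Reaches n (initial N) c

/-- A final configuration: `σ = [0, n]` and `z = 4n - 2`. -/
def Final (n : ℕ) (c : Config N) : Prop := c.σ = [0, n] ∧ c.z = 4 * n - 2

/-- `D(c)`: the set of trees of final configurations reachable from `c`. -/
def Dset (n : ℕ) (c : Config N) : Set (Finset (N × ℕ × ℕ)) :=
  {t' | ∃ c', Reaches n c c' ∧ Final n c' ∧ c'.t = t'}

/-- `(i,j) ⪯ (p,q)`: span `(i,j)` is encompassed by `(p,q)`, i.e. `p ≤ i < j ≤ q`. -/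
def Enc (s₁ s₂ : ℕ × ℕ) : Prop := s₂.1 ≤ s₁.1 ∧ s₁.1 < s₁.2 ∧ s₁.2 ≤ s₂.2

/-- `(i,j) ≺ (p,q)`: strict encompassment. -/
def SEnc (s₁ s₂ : ℕ × ℕ) : Prop := Enc s₁ s₂ ∧ s₁ ≠ s₂

/-- `tG` is a gold tree for sentence length `n`: valid spans, pairwise-distinct
spans, pairwise non-crossing spans, and exactly one bracket with span `(0, n)`
(uniqueness follows from distinctness of spans). -/
structure IsGold (n : ℕ) (tG : Finset (N × ℕ × ℕ)) : Prop where
  validSpans : ∀ b ∈ tG, (span b).1 < (span b).2 ∧ (span b).2 ≤ n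
  distinctSpans : ∀ b₁ ∈ tG, ∀ b₂ ∈ tG, span b₁ = span b₂ → b₁ = b₂
  noncrossing : ∀ b₁ ∈ tG, ∀ b₂ ∈ tG,
    Enc (span b₁) (span b₂) ∨ Enc (span b₂) (span b₁) ∨
    (span b₁).2 ≤ (span b₂).1 ∨ (span b₂).2 ≤ (span b₁).1
  root : ∃ X, (X, 0, n) ∈ tG

open Classical in
/-- `left(c)`: gold brackets (strictly, at even steps) encompassing the top
span whose left boundary occurs on the stack. -/
noncomputable def leftSet (tG : Finset (N × ℕ × ℕ)) (c : Config N) :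
    Finset (N × ℕ × ℕ) :=
  tG.filter fun b =>
    (if Even c.z then SEnc (topI c.σ, topJ c.σ) (span b)
     else Enc (topI c.σ, topJ c.σ) (span b)) ∧ (span b).1 ∈ c.σ

open Classical in
/-- `right(c)`: gold brackets entirely on the queue. -/
noncomputable def rightSet (tG : Finset (N × ℕ × ℕ)) (c : Config N) :
    Finset (N × ℕ × ℕ) :=
  tG.filter fun b => topJ c.σ ≤ (span b).1

open Classical in
/-- `reach(c)`: the reachable gold brackets (all of `t_G` at the initial
configuration, whose stack has fewer than two boundaries). -/
noncomputable def reach (tG : Finset (N × ℕ × ℕ)) (c : Config N) :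
    Finset (N × ℕ × ℕ) :=
  if c.σ.length < 2 then tG else leftSet tG c ∪ rightSet tG c

/-- The optimal tree `t*(c) = t ∪ reach(c)`. -/
noncomputable def tstar (tG : Finset (N × ℕ × ℕ)) (c : Config N) :
    Finset (N × ℕ × ℕ) :=
  c.t ∪ reach tG c

/-- `b = next(c)`: the `≺`-minimal element of `left(c)`. -/
def IsNext (tG : Finset (N × ℕ × ℕ)) (c : Config N) (b : N × ℕ × ℕ) : Prop :=
  b ∈ leftSet tG c ∧ ∀ b' ∈ leftSet tG c, Enc (span b) (span b')

/-- The dynamic-oracle policy `dyna(c)` as a predicate on actions. -/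
def Dyna (tG : Finset (N × ℕ × ℕ)) (c : Config N) (a : Action N) : Prop :=
  if c.σ.length < 2 then a = Action.sh
  else if Even c.z then
    ∃ b, IsNext tG c b ∧
      (((span b).1 = topI c.σ ∧ topJ c.σ < (span b).2 ∧ a = Action.sh) ∨
       ((span b).1 < topI c.σ ∧ (span b).2 = topJ c.σ ∧ a = Action.comb) ∨
       ((span b).1 < topI c.σ ∧ topJ c.σ < (span b).2 ∧
          (a = Action.sh ∨ a = Action.comb)))
  else
    (∃ X, (X, topI c.σ, topJ c.σ) ∈ tG ∧ a = Action.label X) ∨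
    ((∀ X, (X, topI c.σ, topJ c.σ) ∉ tG) ∧ a = Action.nolabel)

/-- `F1` of a predicted bracket set `t'` against the gold tree `tG`
(`0` when `t' ∩ tG = ∅`). -/
noncomputable def f1 (tG t' : Finset (N × ℕ × ℕ)) : ℝ :=
  if t' ∩ tG = ∅ then 0
  else
    (2 * (((t' ∩ tG).card : ℝ) / (tG.card : ℝ)) * (((t' ∩ tG).card : ℝ) / (t'.card : ℝ))) /
      ((((t' ∩ tG).card : ℝ) / (tG.card : ℝ)) + (((t' ∩ tG).card : ℝ) / (t'.card : ℝ)))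

/-- `F1(c)`: the best `F1` among trees reachable from `c`. -/
noncomputable def configF1 (n : ℕ) (tG : Finset (N × ℕ × ℕ)) (c : Config N) : ℝ :=
  sSup (f1 tG '' Dset n c)

/-- A run of (applicable) actions from one configuration to another. -/
inductive Run (n : ℕ) : Config N → List (Action N) → Config N → Prop
  | refl (c : Config N) : Run n c [] c
  | step {c c' : Config N} {as : List (Action N)} (a : Action N)
      (happ : App n c a) (h : Run n (doAct c a) as c') : Run n c (a :: as) c'

/-- A run all of whose actions follow the dynamic oracle. -/
inductive DynaRun (n : ℕ) (tG : Finset (N × ℕ × ℕ)) : Config N → Config N → Prop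
  | refl (c : Config N) : DynaRun n tG c c
  | step {c c' : Config N} (a : Action N) (happ : App n c a) (hdyna : Dyna tG c a)
      (h : DynaRun n tG (doAct c a) c') : DynaRun n tG c c'

def isSh : Action N → Bool
  | .sh => true
  | _ => false

def isComb : Action N → Bool
  | .comb => true
  | _ => false

/-- Label-step actions: `label-X` or `nolabel`. -/
def isLabelStep : Action N → Bool
  | .label _ => true
  | .nolabel => true
  | _ => false

/-!
No action makes a gold bracket reachable again once it has become unreachable, and a label action
adds a gold bracket to `t` only if it was reachable. Since `t` itself only grows, along any run the
gold part of `t ∪ reach` shrinks while the non-gold part of `t` grows: every tree in `D(c)` has no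
more hits and no fewer false positives than `t*(c)`. Conversely, the dynamic oracle (shift or
combine towards `next(c)`, then label with the gold label if there is one) keeps `t*(c)` fixed, so
`t*(c)` is itself in `D(c)`. As `F1` strictly increases with hits and strictly decreases with false
positives, `t*(c)` is the unique maximiser.
-/

open Finset

section Stack

variable {σ : List ℕ} {a : ℕ}

@[simp] lemma topJ_append_singleton (l : List ℕ) (a : ℕ) : topJ (l ++ [a]) = a := by
  simp [topJ]

@[simp] lemma topJ_append_pair (l : List ℕ) (a b : ℕ) : topJ (l ++ [a, b]) = b := by
  simp [topJ]

@[simp] lemma topI_append_pair (l : List ℕ) (a b : ℕ) : topI (l ++ [a, b]) = a := by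
  simp [topI]

@[simp] lemma dropLast_dropLast_append_pair (l : List ℕ) (a b : ℕ) :
    (l ++ [a, b]).dropLast.dropLast = l := by
  simp

lemma le_topJ_of_mem (hσ : σ.Pairwise (· < ·)) (ha : a ∈ σ) : a ≤ topJ σ := by
  obtain ⟨l, b, rfl⟩ := (List.eq_nil_or_concat σ).resolve_left (List.ne_nil_of_mem ha)
  simp only [List.concat_eq_append, List.pairwise_append, List.mem_append,
    List.mem_singleton] at hσ ha
  rcases ha with ha | rfl
  · simpa using (hσ.2.2 a ha b rfl).le
  · simp

lemma exists_eq_append_pair (h : 2 ≤ σ.length) : ∃ l, σ = l ++ [topI σ, topJ σ] := by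
  obtain ⟨l, b, rfl⟩ := (List.eq_nil_or_concat σ).resolve_left (by rintro rfl; simp at h)
  obtain ⟨l, a, rfl⟩ := (List.eq_nil_or_concat l).resolve_left (by rintro rfl; simp at h)
  exact ⟨l, by simp⟩

end Stack

section

omit [DecidableEq N]

structure WellFormed (n : ℕ) (c : Config N) : Prop where
  head?_eq : c.σ.head? = some 0
  pairwise : c.σ.Pairwise (· < ·)
  topJ_le : topJ c.σ ≤ n
  /-- At even `z` the run so far made `topJ σ` shifts and `topJ σ + 1 - length σ` combinations,
  each followed by a label step. -/
  step_count : c.z + c.z % 2 + 2 * c.σ.length = 4 * topJ c.σ + 2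

namespace WellFormed

variable {n : ℕ} {c : Config N}

lemma ne_nil (hc : WellFormed n c) : c.σ ≠ [] := by
  intro h; simpa [h] using hc.head?_eq

lemma eq_singleton (hc : WellFormed n c) (h : c.σ.length < 2) : c.σ = [0] ∧ c.z = 0 := by
  have hσ : c.σ = [0] := by
    have := hc.head?_eq
    match hσ : c.σ, h with
    | [a], _ => simp_all
    | [], _ => simp_all
  have hj : topJ c.σ = 0 := by rw [hσ]; rfl
  have := hc.step_count
  rw [hj, hσ, List.length_singleton] at this
  exact ⟨hσ, by omega⟩

lemma exists_eq_append (hc : WellFormed n c) (h : 2 ≤ c.σ.length) :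
    ∃ l i j, c.σ = l ++ [i, j] ∧ l.Pairwise (· < ·) ∧ (∀ p ∈ l, p < i) ∧ i < j := by
  obtain ⟨l, hl⟩ := exists_eq_append_pair h
  have hs := hc.pairwise
  rw [hl] at hs
  simp only [List.pairwise_append, List.pairwise_cons, List.mem_cons, forall_eq_or_imp] at hs
  exact ⟨l, _, _, hl, hs.1, fun p hp => (hs.2.2 p hp).1, hs.2.1.1.1⟩

lemma initial (n : ℕ) : WellFormed n (SpanParser.initial N) where
  head?_eq := rfl
  pairwise := by simp [SpanParser.initial]
  topJ_le := Nat.zero_le n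
  step_count := rfl

lemma final_of_le (hc : WellFormed n c) (hn : 0 < n) (hz : 4 * n - 2 ≤ c.z) : Final n c := by
  have hcount := hc.step_count
  have hjn := hc.topJ_le
  by_cases h2 : c.σ.length < 2
  · have := (hc.eq_singleton h2).2
    omega
  obtain ⟨l, i, j, hl, -⟩ := hc.exists_eq_append (by omega)
  have hhead := hc.head?_eq
  simp only [hl, List.length_append, List.length_cons, List.length_nil, topJ_append_pair]
    at hcount hjn hhead
  have hl0 : l = [] := List.eq_nil_of_length_eq_zero (by omega)
  subst hl0
  simp only [List.nil_append, List.head?_cons, Option.some.injEq] at hhead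
  have hj : j = n := by omega
  exact ⟨by simp [hl, hhead, hj], by omega⟩

lemma z_lt_of_odd (hc : WellFormed n c) (hz : Odd c.z) (h2 : 2 ≤ c.σ.length) :
    c.z < 4 * n - 1 := by
  have hcount := hc.step_count
  have hjn := hc.topJ_le
  rw [Nat.odd_iff] at hz
  omega

end WellFormed

end

namespace WellFormed

variable {n : ℕ} {c : Config N}

lemma doAct (hc : WellFormed n c) {a : Action N} (ha : App n c a) :
    WellFormed n (doAct c a) := by
  have hcount := hc.step_count
  cases a with
  | sh =>
    obtain ⟨hz, -, hj⟩ := ha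
    rw [Nat.even_iff] at hz
    refine ⟨by simp [SpanParser.doAct, List.head?_append, hc.head?_eq], ?_, ?_, ?_⟩
    · simpa [SpanParser.doAct, List.pairwise_append] using
        ⟨hc.pairwise, fun p hp => le_topJ_of_mem hc.pairwise hp⟩
    · simpa [SpanParser.doAct] using hj
    · simp only [SpanParser.doAct, topJ_append_singleton, List.length_append,
        List.length_singleton]
      omega
  | comb =>
    obtain ⟨hz, h3⟩ := ha
    rw [Nat.even_iff] at hz
    obtain ⟨l, i, j, hl, -, hlt, hij⟩ := hc.exists_eq_append (by omega)
    have hhead := hc.head?_eq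
    have hs := hc.pairwise
    have hjn := hc.topJ_le
    simp only [SpanParser.doAct, hl, dropLast_dropLast_append_pair, topJ_append_pair]
      at hhead hs hcount hjn ⊢
    refine ⟨?_, ?_, ?_, ?_⟩
    · rcases l with _ | ⟨p, l⟩
      · simp [hl] at h3
      · simpa using hhead
    · simp only [List.pairwise_append, List.pairwise_cons] at hs
      simpa [List.pairwise_append] using ⟨hs.1, fun p hp => (hlt p hp).trans hij⟩
    · simpa using hjn
    · simp only [List.length_append, List.length_cons, List.length_nil] at hcount
      simp only [topJ_append_singleton, List.length_append, List.length_singleton]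
      omega
  | label _ | nolabel =>
    have hz := Nat.odd_iff.1 ha.1
    exact ⟨hc.head?_eq, hc.pairwise, hc.topJ_le, by simp only [SpanParser.doAct]; omega⟩

lemma of_reaches (hc : WellFormed n c) {c' : Config N} (h : Reaches n c c') :
    WellFormed n c' := by
  induction h with
  | refl => exact hc
  | tail _ hstep ih =>
    obtain ⟨a, ha, rfl⟩ := hstep
    exact ih.doAct ha

end WellFormed

lemma Valid.wellFormed {n : ℕ} {c : Config N} (hc : Valid n c) : WellFormed n c :=
  (WellFormed.initial n).of_reaches hc

section Reach

variable {tG : Finset (N × ℕ × ℕ)} {c : Config N}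

lemma reach_subset (tG : Finset (N × ℕ × ℕ)) (c : Config N) : reach tG c ⊆ tG := by
  classical
  unfold reach leftSet rightSet
  split
  exacts [subset_rfl, union_subset (filter_subset _ _) (filter_subset _ _)]

lemma reach_of_length_lt_two (h : c.σ.length < 2) : reach tG c = tG := if_pos h

lemma mem_reach_of_two_le (h : 2 ≤ c.σ.length) {b : N × ℕ × ℕ} :
    b ∈ reach tG c ↔ b ∈ leftSet tG c ∨ b ∈ rightSet tG c := by
  rw [reach, if_neg (by omega), mem_union]

variable {l : List ℕ} {i j : ℕ} {X : N} {p q : ℕ}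

omit [DecidableEq N] in
lemma mem_leftSet_of_even (hσ : c.σ = l ++ [i, j]) (hij : i < j) (hz : Even c.z) :
    (X, p, q) ∈ leftSet tG c ↔
      (X, p, q) ∈ tG ∧ p ≤ i ∧ j ≤ q ∧ ¬(p = i ∧ q = j) ∧ p ∈ l ++ [i, j] := by
  simp only [leftSet, if_pos hz, mem_filter, hσ, topI_append_pair, topJ_append_pair, SEnc, Enc,
    span, ne_eq, Prod.mk.injEq]
  grind

omit [DecidableEq N] in
lemma mem_leftSet_of_odd (hσ : c.σ = l ++ [i, j]) (hij : i < j) (hz : ¬Even c.z) :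
    (X, p, q) ∈ leftSet tG c ↔ (X, p, q) ∈ tG ∧ p ≤ i ∧ j ≤ q ∧ p ∈ l ++ [i, j] := by
  simp only [leftSet, if_neg hz, mem_filter, hσ, topI_append_pair, topJ_append_pair, Enc, span]
  grind

omit [DecidableEq N] in
lemma mem_rightSet (hσ : c.σ = l ++ [i, j]) :
    (X, p, q) ∈ rightSet tG c ↔ (X, p, q) ∈ tG ∧ j ≤ p := by
  simp [rightSet, hσ, span]

lemma mem_reach_of_even (hσ : c.σ = l ++ [i, j]) (hij : i < j) (hz : Even c.z) :
    (X, p, q) ∈ reach tG c ↔ (X, p, q) ∈ tG ∧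
      (p ≤ i ∧ j ≤ q ∧ ¬(p = i ∧ q = j) ∧ p ∈ l ++ [i, j] ∨ j ≤ p) := by
  rw [mem_reach_of_two_le (by simp [hσ]), mem_leftSet_of_even hσ hij hz, mem_rightSet hσ]
  tauto

lemma mem_reach_of_odd (hσ : c.σ = l ++ [i, j]) (hij : i < j) (hz : ¬Even c.z) :
    (X, p, q) ∈ reach tG c ↔ (X, p, q) ∈ tG ∧ (p ≤ i ∧ j ≤ q ∧ p ∈ l ++ [i, j] ∨ j ≤ p) := by
  rw [mem_reach_of_two_le (by simp [hσ]), mem_leftSet_of_odd hσ hij hz, mem_rightSet hσ]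
  tauto

end Reach

section Monotone

variable {n : ℕ} {tG : Finset (N × ℕ × ℕ)} {c : Config N}

lemma reach_doAct_subset (hc : WellFormed n c) {a : Action N} (ha : App n c a) :
    reach tG (doAct c a) ⊆ reach tG c := by
  by_cases h2 : c.σ.length < 2
  · rw [reach_of_length_lt_two h2]
    exact reach_subset _ _
  obtain ⟨l, i, j, hσ, -, hlt, hij⟩ := hc.exists_eq_append (by omega)
  rintro ⟨X, p, q⟩ hb
  cases a with
  | sh =>
    have hz := ha.1
    rw [mem_reach_of_odd (l := l ++ [i]) (by simp [doAct, hσ]) (by omega : j < j + 1)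
      (by simpa [doAct, Nat.even_add_one] using hz)] at hb
    rw [mem_reach_of_even hσ hij hz]
    obtain ⟨hG, ⟨hp, hq, hmem⟩ | hp⟩ := hb
    · simp only [List.mem_append, List.mem_cons, List.not_mem_nil, or_false] at hmem ⊢
      grind
    · exact ⟨hG, Or.inr (by omega)⟩
  | comb =>
    obtain ⟨hz, h3⟩ := ha
    obtain ⟨l, h, rfl⟩ := (List.eq_nil_or_concat l).resolve_left (by rintro rfl; simp [hσ] at h3)
    rw [mem_reach_of_odd (l := l) (by simp [doAct, hσ, topJ]) ((hlt h (by simp)).trans hij)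
      (by simpa [doAct, Nat.even_add_one] using hz)] at hb
    rw [mem_reach_of_even hσ hij hz]
    simp only [List.concat_eq_append, List.mem_append, List.mem_cons, List.not_mem_nil,
      or_false] at hb hlt ⊢
    grind
  | label _ | nolabel =>
    have hz : ¬Even c.z := Nat.not_even_iff_odd.2 ha.1
    rw [mem_reach_of_even (l := l) (by simp [doAct, hσ]) hij
      (by simpa [doAct, Nat.even_add_one] using hz)] at hb
    rw [mem_reach_of_odd hσ hij hz]
    tauto

lemma mem_reach_of_label (hc : WellFormed n c) (h2 : 2 ≤ c.σ.length) (hz : ¬Even c.z) {X : N}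
    (hX : (X, topI c.σ, topJ c.σ) ∈ tG) : (X, topI c.σ, topJ c.σ) ∈ reach tG c := by
  obtain ⟨l, i, j, hσ, -, -, hij⟩ := hc.exists_eq_append h2
  rw [hσ, topI_append_pair, topJ_append_pair] at hX ⊢
  exact (mem_reach_of_odd hσ hij hz).2 ⟨hX, Or.inl ⟨le_rfl, le_rfl, by simp⟩⟩

@[simp] lemma z_doAct (c : Config N) (a : Action N) : (doAct c a).z = c.z + 1 := by
  cases a <;> rfl

lemma t_subset_doAct (c : Config N) (a : Action N) : c.t ⊆ (doAct c a).t := by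
  cases a <;> simp [doAct, subset_insert]

lemma tstar_doAct_subset (hc : WellFormed n c) {a : Action N} (ha : App n c a) :
    tstar tG (doAct c a) ⊆ tstar tG c ∪ ((doAct c a).t \ tG) := by
  intro b hb
  rcases mem_union.1 hb with hb | hb
  · by_cases hbG : b ∈ tG
    · refine mem_union_left _ ?_
      cases a with
      | label X =>
        rcases mem_insert.1 hb with rfl | hb
        · exact mem_union_right _ (mem_reach_of_label hc ha.2 (Nat.not_even_iff_odd.2 ha.1) hbG)
        · exact mem_union_left _ hb
      | _ => exact mem_union_left _ hb
    · exact mem_union_right _ (mem_sdiff.2 ⟨hb, hbG⟩)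
  · exact mem_union_left _ (mem_union_right _ (reach_doAct_subset hc ha hb))

lemma tstar_sdiff (tG : Finset (N × ℕ × ℕ)) (c : Config N) : tstar tG c \ tG = c.t \ tG := by
  rw [tstar, union_sdiff_distrib, sdiff_eq_empty_iff_subset.2 (reach_subset tG c), union_empty]

lemma t_subset_of_reaches {c' : Config N} (h : Reaches n c c') : c.t ⊆ c'.t := by
  induction h with
  | refl => exact subset_rfl
  | tail _ hstep ih =>
    obtain ⟨a, -, rfl⟩ := hstep
    exact ih.trans (t_subset_doAct _ a)

lemma tstar_inter_subset_of_reaches (hc : WellFormed n c) {c' : Config N} (h : Reaches n c c') :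
    tstar tG c' ∩ tG ⊆ tstar tG c ∩ tG := by
  induction h with
  | refl => exact subset_rfl
  | tail hr hstep ih =>
    obtain ⟨a, ha, rfl⟩ := hstep
    refine subset_trans (fun b hb => ?_) ih
    obtain ⟨hb, hbG⟩ := mem_inter.1 hb
    rcases mem_union.1 (tstar_doAct_subset (hc.of_reaches hr) ha hb) with hb | hb
    · exact mem_inter.2 ⟨hb, hbG⟩
    · exact absurd (mem_sdiff.1 hb).2 (not_not.2 hbG)

end Monotone

section Gold

variable {n : ℕ} {tG : Finset (N × ℕ × ℕ)}

omit [DecidableEq N] in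
lemma IsGold.pos (hG : IsGold n tG) : 0 < n := by
  obtain ⟨X, hX⟩ := hG.root
  exact (hG.validSpans _ hX).1

omit [DecidableEq N] in
/-- Gold spans containing a common span are totally ordered by `⪯`, so a narrowest one is
the `⪯`-least. -/
lemma IsGold.exists_least (hG : IsGold n tG) {S : Finset (N × ℕ × ℕ)} (hS : S ⊆ tG)
    (hne : S.Nonempty) {s : ℕ × ℕ} (hs : ∀ b ∈ S, Enc s (span b)) :
    ∃ b ∈ S, ∀ b' ∈ S, Enc (span b) (span b') := by
  obtain ⟨b, hb, hmin⟩ := exists_min_image S (fun b => (span b).2 - (span b).1) hne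
  refine ⟨b, hb, fun b' hb' => ?_⟩
  have := hmin b' hb'
  have := hs b hb
  have := hs b' hb'
  rcases hG.noncrossing b (hS hb) b' (hS hb') with h | h | h | h <;> unfold Enc at * <;> omega

omit [DecidableEq N] in
lemma enc_of_mem_leftSet {c : Config N} {b : N × ℕ × ℕ} (hb : b ∈ leftSet tG c) :
    Enc (topI c.σ, topJ c.σ) (span b) := by
  classical
  unfold leftSet at hb
  have := (mem_filter.1 hb).2.1
  split_ifs at this
  exacts [this.1, this]

omit [DecidableEq N] in
lemma IsGold.exists_isNext (hG : IsGold n tG) {c : Config N} (hne : (leftSet tG c).Nonempty) :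
    ∃ b, IsNext tG c b := by
  classical
  exact hG.exists_least (fun _ hb => (mem_filter.1 hb).1) hne (fun _ => enc_of_mem_leftSet)

end Gold

section Final

variable {n : ℕ} {tG : Finset (N × ℕ × ℕ)} {c : Config N}

omit [DecidableEq N] in
lemma not_app_of_final (hF : Final n c) (a : Action N) : ¬App n c a := by
  obtain ⟨hσ, hz⟩ := hF
  have hodd : ¬Odd c.z := by rw [Nat.not_odd_iff_even, Nat.even_iff]; omega
  cases a with
  | sh => simp [App, hσ, topJ]
  | comb => simp [App, hσ]
  | label _ => exact fun ha => hodd ha.1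
  | nolabel => exact fun ha => hodd ha.1

lemma eq_of_reaches_of_final (hF : Final n c) {c' : Config N} (h : Reaches n c c') : c' = c := by
  induction h with
  | refl => rfl
  | tail _ hstep ih =>
    subst ih
    obtain ⟨a, ha, -⟩ := hstep
    exact absurd ha (not_app_of_final hF a)

lemma reach_of_final (hG : IsGold n tG) (hF : Final n c) : reach tG c = ∅ := by
  obtain ⟨hσ, hz⟩ := hF
  have hn := hG.pos
  rw [eq_empty_iff_forall_notMem]
  rintro ⟨X, p, q⟩ hb
  rw [mem_reach_of_even (l := []) hσ hn (by rw [Nat.even_iff]; omega)] at hb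
  have := hG.validSpans _ hb.1
  simp only [span] at this
  omega

lemma tstar_of_final (hG : IsGold n tG) (hF : Final n c) : tstar tG c = c.t := by
  rw [tstar, reach_of_final hG hF, union_empty]

omit [DecidableEq N] in
lemma root_mem_leftSet (hc : WellFormed n c) (h2 : 2 ≤ c.σ.length) (hF : ¬Final n c) {X : N}
    (hX : (X, 0, n) ∈ tG) : (X, 0, n) ∈ leftSet tG c := by
  obtain ⟨l, i, j, hσ, -, hlt, hij⟩ := hc.exists_eq_append h2
  have h0 : 0 ∈ l ++ [i, j] := hσ ▸ List.mem_of_mem_head? hc.head?_eq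
  have hj : j ≤ n := by simpa [hσ] using hc.topJ_le
  by_cases hz : Even c.z
  · refine (mem_leftSet_of_even hσ hij hz).2 ⟨hX, Nat.zero_le i, hj, ?_, h0⟩
    rintro ⟨rfl, rfl⟩
    have hl : l = [] := List.eq_nil_iff_forall_not_mem.2 fun p hp => by simpa using hlt p hp
    rw [hl, List.nil_append] at hσ
    have hcount := hc.step_count
    simp only [hσ, topJ, List.getLastD_cons, List.getLastD_nil, List.length_cons,
      List.length_nil] at hcount
    rw [Nat.even_iff] at hz
    exact hF ⟨hσ, by omega⟩
  · exact (mem_leftSet_of_odd hσ hij hz).2 ⟨hX, Nat.zero_le i, hj, h0⟩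

lemma root_mem_reach (hc : WellFormed n c) (hF : ¬Final n c) {X : N} (hX : (X, 0, n) ∈ tG) :
    (X, 0, n) ∈ reach tG c := by
  by_cases h2 : c.σ.length < 2
  · rwa [reach_of_length_lt_two h2]
  · exact (mem_reach_of_two_le (by omega)).2 (Or.inl (root_mem_leftSet hc (by omega) hF hX))

end Final

section Oracle

variable {n : ℕ} {tG : Finset (N × ℕ × ℕ)} {c : Config N}

lemma reach_subset_reach_sh_of_length_lt_two (hG : IsGold n tG) (hc : WellFormed n c)
    (h2 : c.σ.length < 2) : reach tG c ⊆ reach tG (doAct c .sh) := by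
  obtain ⟨hσ, hz⟩ := hc.eq_singleton h2
  rw [reach_of_length_lt_two h2]
  rintro ⟨X, p, q⟩ hb
  rw [mem_reach_of_odd (l := []) (by simp [doAct, hσ, topJ]) zero_lt_one (by simp [doAct, hz])]
  have := hG.validSpans _ hb
  simp only [span] at this
  grind

lemma reach_subset_reach_sh_of_isNext (hG : IsGold n tG) (hc : WellFormed n c)
    (h2 : 2 ≤ c.σ.length) (hz : Even c.z) {b₀ : N × ℕ × ℕ} (hb₀ : IsNext tG c b₀)
    (hp₀ : (span b₀).1 = topI c.σ) :
    topJ c.σ < n ∧ reach tG c ⊆ reach tG (doAct c .sh) := by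
  obtain ⟨l, i, j, hσ, -, hlt, hij⟩ := hc.exists_eq_append h2
  obtain ⟨Y, p₀, q₀⟩ := b₀
  obtain ⟨hnext, hmin⟩ := hb₀
  rw [hσ, topI_append_pair] at hp₀
  simp only [span] at hp₀
  subst hp₀
  have h₀ := (mem_leftSet_of_even hσ hij hz).1 hnext
  have hq₀ : j < q₀ := by omega
  have hq₀n : q₀ ≤ n := (hG.validSpans _ h₀.1).2
  refine ⟨by simp only [hσ, topJ_append_pair]; omega, ?_⟩
  rintro ⟨X, p, q⟩ hb
  have hσ' : (doAct c .sh).σ = (l ++ [p₀]) ++ [j, j + 1] := by simp [doAct, hσ]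
  rw [mem_reach_of_odd hσ' (by omega) (by simpa [doAct, Nat.even_add_one] using hz)]
  rcases (mem_reach_of_two_le h2).1 hb with hb | hb
  · have henc := hmin _ hb
    have := (mem_leftSet_of_even hσ hij hz).1 hb
    simp only [Enc, span] at henc
    grind
  · have := (mem_rightSet hσ).1 hb
    have := hG.validSpans _ this.1
    simp only [span] at this
    grind

lemma reach_subset_reach_comb_of_isNext (hc : WellFormed n c) (h2 : 2 ≤ c.σ.length)
    (hz : Even c.z) {b₀ : N × ℕ × ℕ} (hb₀ : IsNext tG c b₀) (hp₀ : (span b₀).1 < topI c.σ) :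
    3 ≤ c.σ.length ∧ reach tG c ⊆ reach tG (doAct c .comb) := by
  obtain ⟨l, i, j, hσ, hsorted, hlt, hij⟩ := hc.exists_eq_append h2
  obtain ⟨Y, p₀, q₀⟩ := b₀
  obtain ⟨hnext, hmin⟩ := hb₀
  rw [hσ, topI_append_pair] at hp₀
  have h₀ := (mem_leftSet_of_even hσ hij hz).1 hnext
  simp only [span] at hp₀
  have hl₀ : p₀ ∈ l := by grind
  obtain ⟨l, h, rfl⟩ := (List.eq_nil_or_concat l).resolve_left (List.ne_nil_of_mem hl₀)
  rw [List.concat_eq_append] at hσ hsorted hlt hl₀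
  have hh : p₀ ≤ h := by simpa using le_topJ_of_mem hsorted hl₀
  refine ⟨by simp [hσ], ?_⟩
  rintro ⟨X, p, q⟩ hb
  have hσ' : (doAct c .comb).σ = l ++ [h, j] := by simp [doAct, hσ, topJ]
  rw [mem_reach_of_odd hσ' ((hlt h (by simp)).trans hij)
    (by simpa [doAct, Nat.even_add_one] using hz)]
  rcases (mem_reach_of_two_le h2).1 hb with hb | hb
  · have henc := hmin _ hb
    have := (mem_leftSet_of_even hσ hij hz).1 hb
    simp only [Enc, span] at henc
    grind
  · have := (mem_rightSet hσ).1 hb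
    grind

lemma reach_subset_tstar_of_label_step (hc : WellFormed n c) (h2 : 2 ≤ c.σ.length)
    (hz : ¬Even c.z) {c' : Config N} (hσ' : c'.σ = c.σ) (hz' : c'.z = c.z + 1)
    (hspan : ∀ Y, (Y, topI c.σ, topJ c.σ) ∈ tG → (Y, topI c.σ, topJ c.σ) ∈ c'.t) :
    reach tG c ⊆ tstar tG c' := by
  obtain ⟨l, i, j, hσ, -, -, hij⟩ := hc.exists_eq_append h2
  rw [hσ, topI_append_pair, topJ_append_pair] at hspan
  rintro ⟨X, p, q⟩ hb
  rw [mem_reach_of_odd hσ hij hz] at hb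
  by_cases hspan' : p = i ∧ q = j
  · obtain ⟨rfl, rfl⟩ := hspan'
    exact mem_union_left _ (hspan X hb.1)
  · refine mem_union_right _ ((mem_reach_of_even (hσ'.trans hσ) hij ?_).2 ?_)
    · rw [hz', Nat.even_add_one]
      exact hz
    · tauto

lemma tstar_doAct_eq (hc : WellFormed n c) {a : Action N} (ha : App n c a)
    (hnew : (doAct c a).t \ tG ⊆ c.t) (hreach : reach tG c ⊆ tstar tG (doAct c a)) :
    tstar tG (doAct c a) = tstar tG c := by
  refine subset_antisymm ?_ (union_subset ?_ hreach)
  · refine (tstar_doAct_subset hc ha).trans (union_subset subset_rfl ?_)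
    exact hnew.trans subset_union_left
  · exact (t_subset_doAct c a).trans subset_union_left

lemma exists_app_tstar_doAct_eq (hG : IsGold n tG) (hc : WellFormed n c) (hF : ¬Final n c) :
    ∃ a, App n c a ∧ tstar tG (doAct c a) = tstar tG c := by
  by_cases h2 : c.σ.length < 2
  · obtain ⟨hσ, hz⟩ := hc.eq_singleton h2
    have ha : App n c .sh := ⟨by simp [hz], by simp [hσ], by simp [hσ, topJ, hG.pos]⟩
    exact ⟨.sh, ha, tstar_doAct_eq hc ha (by simp [doAct])
      ((reach_subset_reach_sh_of_length_lt_two hG hc h2).trans subset_union_right)⟩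
  rw [not_lt] at h2
  by_cases hz : Even c.z
  · obtain ⟨Xr, hXr⟩ := hG.root
    obtain ⟨b₀, hb₀⟩ := hG.exists_isNext ⟨_, root_mem_leftSet hc h2 hF hXr⟩
    -- `next(c)` starts left of `i` (combine) or at `i` (shift)
    rcases (enc_of_mem_leftSet hb₀.1).1.lt_or_eq with hp₀ | hp₀
    · obtain ⟨h3, hsub⟩ := reach_subset_reach_comb_of_isNext hc h2 hz hb₀ hp₀
      have ha : App n c .comb := ⟨hz, h3⟩
      exact ⟨.comb, ha, tstar_doAct_eq hc ha (by simp [doAct]) (hsub.trans subset_union_right)⟩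
    · obtain ⟨hj, hsub⟩ := reach_subset_reach_sh_of_isNext hG hc h2 hz hb₀ hp₀
      have ha : App n c .sh := ⟨hz, hc.ne_nil, hj⟩
      exact ⟨.sh, ha, tstar_doAct_eq hc ha (by simp [doAct]) (hsub.trans subset_union_right)⟩
  · have hodd : Odd c.z := Nat.not_even_iff_odd.1 hz
    by_cases hX : ∃ X, (X, topI c.σ, topJ c.σ) ∈ tG
    · obtain ⟨X, hX⟩ := hX
      have ha : App n c (.label X) := ⟨hodd, h2⟩
      refine ⟨.label X, ha, tstar_doAct_eq hc ha ?_
        (reach_subset_tstar_of_label_step hc h2 hz rfl rfl fun Y hY => ?_)⟩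
      · simp [doAct, insert_sdiff_of_mem _ hX]
      · rw [hG.distinctSpans _ hY _ hX rfl]
        exact mem_insert_self _ _
    · simp only [not_exists] at hX
      have ha : App n c .nolabel := ⟨hodd, h2, hc.z_lt_of_odd hodd h2⟩
      exact ⟨.nolabel, ha, tstar_doAct_eq hc ha (by simp [doAct])
        (reach_subset_tstar_of_label_step hc h2 hz rfl rfl fun Y hY => absurd hY (hX Y))⟩

lemma tstar_mem_Dset (hG : IsGold n tG) (hc : WellFormed n c) : tstar tG c ∈ Dset n c := by
  induction hk : 4 * n - 2 - c.z generalizing c with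
  | zero =>
    have hF := hc.final_of_le hG.pos (by omega)
    exact ⟨c, .refl, hF, (tstar_of_final hG hF).symm⟩
  | succ k ih =>
    by_cases hF : Final n c
    · exact ⟨c, .refl, hF, (tstar_of_final hG hF).symm⟩
    obtain ⟨a, ha, heq⟩ := exists_app_tstar_doAct_eq hG hc hF
    obtain ⟨c', hr, hF', ht⟩ := ih (hc.doAct ha) (by rw [z_doAct]; omega)
    exact ⟨c', .head ⟨a, ha, rfl⟩ hr, hF', ht.trans heq⟩

end Oracle

section F1

variable {tG : Finset (N × ℕ × ℕ)}

lemma f1_eq {t : Finset (N × ℕ × ℕ)} (h : (t ∩ tG).Nonempty) :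
    f1 tG t = 2 * #(t ∩ tG) / (#tG + #t) := by
  have ht : (0 : ℝ) < #t := by exact_mod_cast (h.mono inter_subset_left).card_pos
  have hG : (0 : ℝ) < #tG := by exact_mod_cast (h.mono inter_subset_right).card_pos
  have hh : (0 : ℝ) < #(t ∩ tG) := by exact_mod_cast h.card_pos
  rw [f1, if_neg h.ne_empty]
  field_simp
  ring

lemma f1_le_one (tG t : Finset (N × ℕ × ℕ)) : f1 tG t ≤ 1 := by
  rcases (t ∩ tG).eq_empty_or_nonempty with h | h
  · simp [f1, h]
  · have h1 := card_le_card (inter_subset_left (s₁ := t) (s₂ := tG))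
    have h2 := card_le_card (inter_subset_right (s₁ := t) (s₂ := tG))
    have h3 := h.card_pos
    rw [f1_eq h, div_le_one (by exact_mod_cast (by omega : 0 < #tG + #t))]
    exact_mod_cast (by omega : 2 * #(t ∩ tG) ≤ #tG + #t)

lemma f1_lt_f1 {A B : Finset (N × ℕ × ℕ)} (hhit : A ∩ tG ⊆ B ∩ tG) (hfp : B \ tG ⊆ A \ tG)
    (hne : A ≠ B) (hB : (B ∩ tG).Nonempty) : f1 tG A < f1 tG B := by
  have hstrict : #(A ∩ tG) < #(B ∩ tG) ∨ #(B \ tG) < #(A \ tG) := by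
    by_contra! h
    apply hne
    rw [← sdiff_union_inter A tG, ← sdiff_union_inter B tG,
      eq_of_subset_of_card_le hhit h.1, eq_of_subset_of_card_le hfp h.2]
  have hcA := card_inter_add_card_sdiff A tG
  have hcB := card_inter_add_card_sdiff B tG
  have h1 := card_le_card hhit
  have h2 := card_le_card hfp
  have h3 := card_le_card (inter_subset_right (s₁ := B) (s₂ := tG))
  have h4 := hB.card_pos
  have hpos : ∀ s : Finset (N × ℕ × ℕ), (0 : ℝ) < #tG + #s := fun s => by
    exact_mod_cast (by omega : 0 < #tG + #s)
  rw [f1_eq hB]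
  rcases (A ∩ tG).eq_empty_or_nonempty with hA | hA
  · rw [f1, if_pos hA]
    exact div_pos (by exact_mod_cast (by omega : 0 < 2 * #(B ∩ tG))) (hpos B)
  rw [f1_eq hA, div_lt_div_iff₀ (hpos A) (hpos B), ← hcA, ← hcB]
  push_cast
  exact_mod_cast (by rcases hstrict with h | h <;> nlinarith :
    2 * #(A ∩ tG) * (#tG + (#(B ∩ tG) + #(B \ tG))) <
      2 * #(B ∩ tG) * (#tG + (#(A ∩ tG) + #(A \ tG))))

lemma f1_le_configF1 {n : ℕ} {c : Config N} {t : Finset (N × ℕ × ℕ)} (ht : t ∈ Dset n c) :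
    f1 tG t ≤ configF1 n tG c :=
  le_csSup ⟨1, by rintro _ ⟨t, -, rfl⟩; exact f1_le_one tG t⟩ ⟨t, ht, rfl⟩

end F1

theorem tstar_unique_max_general (n : ℕ) (tG : Finset (N × ℕ × ℕ))
    (hG : IsGold n tG) (c : Config N) (hc : Valid n c)
    (t' : Finset (N × ℕ × ℕ)) (ht' : t' ∈ Dset n c) (hne : t' ≠ tstar tG c) :
    f1 tG t' < configF1 n tG c := by
  have hwf := hc.wellFormed
  obtain ⟨c', hr, -, rfl⟩ := ht'
  have hF : ¬Final n c := fun hF => hne <| by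
    rw [eq_of_reaches_of_final hF hr, tstar_of_final hG hF]
  obtain ⟨X, hX⟩ := hG.root
  have hhit : c'.t ∩ tG ⊆ tstar tG c ∩ tG :=
    (inter_subset_inter_right subset_union_left).trans (tstar_inter_subset_of_reaches hwf hr)
  have hfp : tstar tG c \ tG ⊆ c'.t \ tG :=
    tstar_sdiff tG c ▸ sdiff_subset_sdiff (t_subset_of_reaches hr) subset_rfl
  have hroot : (tstar tG c ∩ tG).Nonempty :=
    ⟨_, mem_inter.2 ⟨mem_union_right _ (root_mem_reach hwf hF hX), hX⟩⟩
  exact (f1_lt_f1 hhit hfp hne hroot).trans_le (f1_le_configF1 (tstar_mem_Dset hG hwf))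

/-- Corollary 1: `t*(c)` is the unique maximizer of `F1` over `D(c)`:
any other reachable tree has strictly smaller `F1` than `F1(c)`. -/
theorem tstar_unique_max (n : ℕ) (hn : 1 ≤ n) (tG : Finset (N × ℕ × ℕ))
    (hG : IsGold n tG) (c : Config N) (hc : Valid n c)
    (t' : Finset (N × ℕ × ℕ)) (ht' : t' ∈ Dset n c) (hne : t' ≠ tstar tG c) :
    f1 tG t' < configF1 n tG c :=
  tstar_unique_max_general n tG hG c hc t' ht' hne

end SpanParser
end

section
/- For every valid non-final configuration c and every action τ ∈ dyna(c), the optimal tree is preserved: t*(τ(c)) = t*(c). (Lemma 3, first part.) -/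
/-!
Formalization of the span-based Structure/Label transition parsing system of
Cross & Huang (2016), "Span-Based Constituency Parsing with a Structure-Label
System and Provably Optimal Dynamic Oracles".

A configuration is `(z, σ, t)` where `z` is the step number, `σ` the stack of
span boundaries and `t` the set of brackets built so far.  A bracket is a
triple `(X, i, j)` with `X` a nonterminal label and `i < j ≤ n` a span.
-/

namespace SpanParser

variable {N : Type*}

variable [DecidableEq N]

/-!
At an odd step the only gold bracket that leaves `reach` is the one with the top span `(i, j)`,
and `label-X` moves exactly that bracket into `t` (`nolabel` is chosen only when there is none).
At an even step `sh` drops from `left` the gold brackets `(p, j)` with `p < i`, and `comb` those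
`(i, q)` with `q > j`; gold brackets starting at `j` pass from `right` to `left` under `sh`. By
minimality, every bracket of `left(c)` encompasses `next(c)`, so such dropped brackets exist only
when `next(c)` ends at `j` (resp. starts at `i`), which is exactly when the oracle forbids `sh`
(resp. `comb`).
-/

@[simp]
lemma topJ_append_pair_s5 (s : List ℕ) (i j : ℕ) : topJ (s ++ [i, j]) = j := by
  simp [topJ]

@[simp]
lemma topI_append_pair_s5 (s : List ℕ) (i j : ℕ) : topI (s ++ [i, j]) = i := by
  simp [topI]

lemma pairwise_lt_append_pair_iff {s : List ℕ} {i j : ℕ} :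
    (s ++ [i, j]).Pairwise (· < ·) ↔ s.Pairwise (· < ·) ∧ (∀ x ∈ s, x < i) ∧ i < j := by
  simp only [List.pairwise_append, List.pairwise_cons, List.mem_cons, List.not_mem_nil]
  grind

def StackInv (c : Config N) : Prop :=
  c = initial N ∨ ∃ s i j, c.σ = s ++ [i, j] ∧ (s ++ [i, j]).Pairwise (· < ·)

lemma StackInv.step {n : ℕ} {c c' : Config N} (hc : StackInv c) (hstep : Step n c c') :
    StackInv c' := by
  obtain ⟨a, happ, rfl⟩ := hstep
  rcases hc with rfl | ⟨s, i, j, hσ, hsort⟩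
  · cases a with
    | sh => exact Or.inr ⟨[], 0, 1, rfl, by simp⟩
    | comb => simp [App, initial] at happ
    | label => simp [App, initial] at happ
    | nolabel => simp [App, initial] at happ
  right
  obtain ⟨hs, hlt, hij⟩ := pairwise_lt_append_pair_iff.1 hsort
  cases a with
  | sh =>
    refine ⟨s ++ [i], j, j + 1, by simp [doAct, hσ],
      pairwise_lt_append_pair_iff.2 ⟨?_, ?_, by omega⟩⟩
    · exact List.pairwise_append.2 ⟨hs, by simp, fun x hx y hy => by simp at hy; grind⟩
    · simp only [List.mem_append, List.mem_singleton]
      grind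
  | comb =>
    rcases s.eq_nil_or_concat' with rfl | ⟨s', h, rfl⟩
    · simp [App, hσ] at happ
    obtain ⟨hs', -, hs'h⟩ := List.pairwise_append.1 hs
    have hhi := hlt h (by simp)
    exact ⟨s', h, j, by simp [doAct, hσ, topJ], pairwise_lt_append_pair_iff.2
      ⟨hs', fun x hx => hs'h x hx h (by simp), by omega⟩⟩
  | label => exact ⟨s, i, j, hσ, hsort⟩
  | nolabel => exact ⟨s, i, j, hσ, hsort⟩

lemma Valid.stackInv {n : ℕ} {c : Config N} (hc : Valid n c) : StackInv c := by
  induction hc with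
  | refl => exact Or.inl rfl
  | tail _ hstep ih => exact ih.step hstep

section Reach

variable {tG : Finset (N × ℕ × ℕ)} {c : Config N} {s : List ℕ} {i j : ℕ}

omit [DecidableEq N] in
lemma mem_leftSet_iff (hσ : c.σ = s ++ [i, j]) (hij : i < j) {X : N} {p q : ℕ} :
    (X, p, q) ∈ leftSet tG c ↔
      (X, p, q) ∈ tG ∧ p ≤ i ∧ j ≤ q ∧ (Even c.z → (p, q) ≠ (i, j)) ∧ p ∈ s ++ [i, j] := by
  by_cases hev : Even c.z <;> simp [leftSet, SEnc, Enc, span, hσ, hev, hij, eq_comm, and_assoc]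

lemma mem_reach_iff (hσ : c.σ = s ++ [i, j]) {X : N} {p q : ℕ} :
    (X, p, q) ∈ reach tG c ↔ (X, p, q) ∈ leftSet tG c ∨ (X, p, q) ∈ tG ∧ j ≤ p := by
  simp [reach, rightSet, hσ, span]

lemma reach_eq_union_of_odd (hσ : c.σ = s ++ [i, j]) (hij : i < j) (hodd : ¬ Even c.z)
    {c' : Config N} (hσ' : c'.σ = c.σ) (hz' : c'.z = c.z + 1) :
    reach tG c = reach tG c' ∪ tG.filter (fun b => span b = (i, j)) := by
  have hev' : Even c'.z := by rw [hz', Nat.even_add_one]; exact hodd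
  ext ⟨X, p, q⟩
  simp only [Finset.mem_union, mem_reach_iff hσ, mem_reach_iff (hσ'.trans hσ),
    mem_leftSet_iff hσ hij, mem_leftSet_iff (hσ'.trans hσ) hij, span, hodd, hev']
  grind

lemma tstar_doAct_label {n : ℕ} (hG : IsGold n tG) (hσ : c.σ = s ++ [i, j]) (hij : i < j)
    (hodd : ¬ Even c.z) {X : N} (hX : (X, i, j) ∈ tG) :
    tstar tG (doAct c (.label X)) = tstar tG c := by
  have hfilter : tG.filter (fun b => span b = (i, j)) = {(X, i, j)} := by
    ext b
    simp only [Finset.mem_filter, Finset.mem_singleton]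
    constructor
    · rintro ⟨hb, hspan⟩
      exact hG.distinctSpans b hb _ hX hspan
    · rintro rfl
      exact ⟨hX, rfl⟩
  rw [tstar, tstar, reach_eq_union_of_odd hσ hij hodd (c' := doAct c (.label X)) rfl rfl, hfilter]
  simp [doAct, hσ]

lemma tstar_doAct_nolabel (hσ : c.σ = s ++ [i, j]) (hij : i < j) (hodd : ¬ Even c.z)
    (hno : ∀ X, (X, i, j) ∉ tG) :
    tstar tG (doAct c .nolabel) = tstar tG c := by
  have hfilter : tG.filter (fun b => span b = (i, j)) = ∅ :=
    Finset.filter_eq_empty_iff.2 fun b hb hspan => hno b.1 (by rwa [← hspan])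
  rw [tstar, tstar, reach_eq_union_of_odd hσ hij hodd (c' := doAct c .nolabel) rfl rfl, hfilter,
    Finset.union_empty]
  rfl

lemma reach_doAct_sh {n : ℕ} (hG : IsGold n tG) (hσ : c.σ = s ++ [i, j])
    (hsort : (s ++ [i, j]).Pairwise (· < ·)) (hev : Even c.z) {b : N × ℕ × ℕ}
    (hnext : IsNext tG c b) (hq : j < (span b).2) :
    reach tG (doAct c .sh) = reach tG c := by
  obtain ⟨-, hlt, hij⟩ := pairwise_lt_append_pair_iff.1 hsort
  have hσ' : (doAct c .sh).σ = (s ++ [i]) ++ [j, j + 1] := by simp [doAct, hσ]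
  have hodd' : ¬ Even (doAct c .sh).z := by simp [doAct, Nat.even_add_one, hev]
  ext ⟨X, p, q⟩
  have hmin : (X, p, q) ∈ leftSet tG c → (span b).2 ≤ q := fun hmem => (hnext.2 _ hmem).2.2
  have hvalid : (X, p, q) ∈ tG → p < q := fun hmem => (hG.validSpans _ hmem).1
  rw [mem_leftSet_iff hσ hij] at hmin
  rw [mem_reach_iff hσ', mem_reach_iff hσ, mem_leftSet_iff hσ' (by omega), mem_leftSet_iff hσ hij]
  simp only [hodd', hev, List.mem_append, List.mem_cons, List.not_mem_nil] at hmin ⊢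
  grind

lemma reach_doAct_comb (hσ : c.σ = s ++ [i, j])
    (hsort : (s ++ [i, j]).Pairwise (· < ·)) (hev : Even c.z) {b : N × ℕ × ℕ}
    (hnext : IsNext tG c b) (hp : (span b).1 < i) :
    reach tG (doAct c .comb) = reach tG c := by
  obtain ⟨hs, hlt, hij⟩ := pairwise_lt_append_pair_iff.1 hsort
  obtain ⟨X₀, p₀, q₀⟩ := b
  have hp₀ : p₀ ∈ s := by
    have := ((mem_leftSet_iff hσ hij).1 hnext.1).2.2.2.2
    simp only [span] at hp
    simp only [List.mem_append, List.mem_cons, List.not_mem_nil] at this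
    grind
  obtain ⟨s', h, rfl⟩ : ∃ s' h, s = s' ++ [h] := by
    rcases s.eq_nil_or_concat' with rfl | hs'
    · simp at hp₀
    · exact hs'
  have hσ' : (doAct c .comb).σ = s' ++ [h, j] := by simp [doAct, hσ, topJ]
  have hodd' : ¬ Even (doAct c .comb).z := by simp [doAct, Nat.even_add_one, hev]
  have hs'h : ∀ x ∈ s', x < h := fun x hx => (List.pairwise_append.1 hs).2.2 x hx h (by simp)
  have hhi : h < i := hlt h (by simp)
  ext ⟨X, p, q⟩
  have hmin : (X, p, q) ∈ leftSet tG c → p ≤ p₀ := fun hmem => (hnext.2 _ hmem).1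
  rw [mem_leftSet_iff hσ hij] at hmin
  rw [mem_reach_iff hσ', mem_reach_iff hσ, mem_leftSet_iff hσ' (by omega), mem_leftSet_iff hσ hij]
  simp only [hodd', hev, List.mem_append, List.mem_cons, List.not_mem_nil] at hmin ⊢
  grind

end Reach

lemma tstar_doAct_sh_initial {n : ℕ} {tG : Finset (N × ℕ × ℕ)} (hG : IsGold n tG) :
    tstar tG (doAct (initial N) .sh) = tstar tG (initial N) := by
  have hσ : (doAct (initial N) .sh).σ = [] ++ [0, 1] := rfl
  have hodd : ¬ Even (doAct (initial N) .sh).z := by simp [doAct, initial]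
  show ∅ ∪ reach tG (doAct (initial N) .sh) = ∅ ∪ reach tG (initial N)
  have hreach : reach tG (initial N) = tG := if_pos (by simp [initial])
  ext ⟨X, p, q⟩
  have hvalid : (X, p, q) ∈ tG → p < q := fun hmem => (hG.validSpans _ hmem).1
  rw [Finset.empty_union, Finset.empty_union, hreach, mem_reach_iff hσ, mem_leftSet_iff hσ one_pos]
  simp only [hodd, List.nil_append, List.mem_cons, List.not_mem_nil]
  grind

omit [DecidableEq N] in
lemma Dyna.of_even {tG : Finset (N × ℕ × ℕ)} {c : Config N} {a : Action N}
    (ha : Dyna tG c a) (hl : 2 ≤ c.σ.length) (hev : Even c.z) :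
    ∃ b, IsNext tG c b ∧
      (a = .sh ∧ topJ c.σ < (span b).2 ∨ a = .comb ∧ (span b).1 < topI c.σ) := by
  rw [Dyna, if_neg (by omega), if_pos hev] at ha
  obtain ⟨b, hnext, hcase⟩ := ha
  exact ⟨b, hnext, by grind⟩

theorem tstar_preserved_by_dyna_general (n : ℕ) (tG : Finset (N × ℕ × ℕ))
    (hG : IsGold n tG) (c : Config N) (hc : Valid n c)
    (a : Action N) (ha : Dyna tG c a) :
    tstar tG (doAct c a) = tstar tG c := by
  rcases hc.stackInv with rfl | ⟨s, i, j, hσ, hsort⟩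
  · have ha : a = .sh := by simpa [Dyna, initial] using ha
    exact ha ▸ tstar_doAct_sh_initial hG
  have hl : 2 ≤ c.σ.length := by simp [hσ]
  have hij : i < j := (pairwise_lt_append_pair_iff.1 hsort).2.2
  by_cases hev : Even c.z
  · obtain ⟨b, hnext, ⟨rfl, hq⟩ | ⟨rfl, hp⟩⟩ := ha.of_even hl hev
    · simp only [hσ, topJ_append_pair_s5] at hq
      exact congrArg (c.t ∪ ·) (reach_doAct_sh hG hσ hsort hev hnext hq)
    · simp only [hσ, topI_append_pair_s5] at hp
      exact congrArg (c.t ∪ ·) (reach_doAct_comb hσ hsort hev hnext hp)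
  · rw [Dyna, if_neg (by omega), if_neg hev] at ha
    rcases ha with ⟨X, hX, rfl⟩ | ⟨hno, rfl⟩
    · simp only [hσ, topI_append_pair_s5, topJ_append_pair_s5] at hX
      exact tstar_doAct_label hG hσ hij hev hX
    · simp only [hσ, topI_append_pair_s5, topJ_append_pair_s5] at hno
      exact tstar_doAct_nolabel hσ hij hev hno

/-- Lemma 3, first part: oracle actions preserve the optimal tree:
`t*(τ(c)) = t*(c)` for every `τ ∈ dyna(c)`. -/
theorem tstar_preserved_by_dyna (n : ℕ) (hn : 1 ≤ n) (tG : Finset (N × ℕ × ℕ))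
    (hG : IsGold n tG) (c : Config N) (hc : Valid n c) (hnf : ¬ Final n c)
    (a : Action N) (ha : Dyna tG c a) :
    tstar tG (doAct c a) = tstar tG c :=
  tstar_preserved_by_dyna_general n tG hG c hc a ha

end SpanParser
end
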